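/- If Σ_{k=0}^{∞} 1/‖D_k‖ = ∞, then for every z ∈ ℂ the set of sequences u : ℤ_+ → ℂ^l that satisfy the eigenvalue equation D_{n−1}u_{n−1} + D_n u_{n+1} + V_n u_n = z u_n for all n ≥ 1 and are square-summable (Σ_{n≥0} ‖u_n‖² < ∞) is a complex vector subspace of dimension at most l. -/

import Mathlib

/-!
The Wronskian `W_n(u, v) = u_{n+1} ⬝ D_n v_n - v_{n+1} ⬝ D_n u_n` (bilinear dot product, no
conjugation) of two solutions does not depend on `n`, because `D_n` and `V_n` are symmetric.
For square-summable solutions `|W_n| ≤ ‖D_n‖ t_n` with `(t_n)` summable, so `W ≠ 0` would give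
`∑ 1 / ‖D_n‖ ≤ ∑ t_n / |W| < ∞`. Hence the image of the square-summable solutions under the map
`u ↦ (u_0, u_1)`, which is injective because every `D_n` is invertible, is isotropic for the
nondegenerate alternating form `(x, y) ↦ x_1 ⬝ D_0 y_0 - y_1 ⬝ D_0 x_0` on `ℂ^{2l}`, so it has
dimension at most `l`.
-/

open Matrix Filter

noncomputable section

/-- The complexification of a real matrix. -/
def cmat {l : ℕ} (A : Matrix (Fin l) (Fin l) ℝ) : Matrix (Fin l) (Fin l) ℂ :=
  A.map (Complex.ofReal)

/-- The operator norm of a real `l×l` matrix, i.e. the norm of the induced continuous linear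
map on Euclidean space. -/
def opNorm {l : ℕ} (A : Matrix (Fin l) (Fin l) ℝ) : ℝ :=
  ‖Matrix.toEuclideanCLM (𝕜 := ℝ) (n := Fin l) A‖

namespace Matrix

section CommRing

variable {R ι : Type*} [CommRing R] [Fintype ι]

def IsJacobiSolution (D V : ℕ → Matrix ι ι R) (z : R) (u : ℕ → ι → R) : Prop :=
  ∀ n, 1 ≤ n → D (n - 1) *ᵥ u (n - 1) + D n *ᵥ u (n + 1) + V n *ᵥ u n = z • u n

def jacobiSolutions (D V : ℕ → Matrix ι ι R) (z : R) : Submodule R (ℕ → ι → R) where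
  carrier := {u | IsJacobiSolution D V z u}
  add_mem' {u v} hu hv n hn := by
    simp only [Pi.add_apply, mulVec_add, smul_add]
    linear_combination (norm := module) hu n hn + hv n hn
  zero_mem' n _ := by simp
  smul_mem' c u hu n hn := by
    simp only [Pi.smul_apply, mulVec_smul]
    linear_combination (norm := module) c • hu n hn

def wronskian (D : ℕ → Matrix ι ι R) (u v : ℕ → ι → R) (n : ℕ) : R :=
  u (n + 1) ⬝ᵥ (D n *ᵥ v n) - v (n + 1) ⬝ᵥ (D n *ᵥ u n)

theorem IsSymm.dotProduct_mulVec_comm {A : Matrix ι ι R} (hA : A.IsSymm) (x y : ι → R) :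
    x ⬝ᵥ (A *ᵥ y) = y ⬝ᵥ (A *ᵥ x) := by
  rw [dotProduct_mulVec, ← mulVec_transpose, hA.eq, dotProduct_comm]

variable {D V : ℕ → Matrix ι ι R} {z : R} {u v : ℕ → ι → R}

theorem IsJacobiSolution.mulVec_succ (hu : IsJacobiSolution D V z u) (n : ℕ) :
    D (n + 1) *ᵥ u (n + 2) = z • u (n + 1) - V (n + 1) *ᵥ u (n + 1) - D n *ᵥ u n := by
  have h := hu (n + 1) (by omega)
  simp only [Nat.add_sub_cancel] at h
  linear_combination (norm := module) h

theorem wronskian_succ (hD : ∀ n, (D n).IsSymm) (hV : ∀ n, (V n).IsSymm)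
    (hu : IsJacobiSolution D V z u) (hv : IsJacobiSolution D V z v) (n : ℕ) :
    wronskian D u v (n + 1) = wronskian D u v n := by
  simp only [wronskian, (hD (n + 1)).dotProduct_mulVec_comm (u (n + 2)),
    (hD (n + 1)).dotProduct_mulVec_comm (v (n + 2)), hu.mulVec_succ, hv.mulVec_succ,
    dotProduct_sub, dotProduct_smul, smul_eq_mul, (hV (n + 1)).dotProduct_mulVec_comm (u (n + 1)),
    dotProduct_comm (u (n + 1)) (v (n + 1)), dotProduct_comm (v (n + 1)) (D n *ᵥ u n),
    dotProduct_comm (u (n + 1)) (D n *ᵥ v n)]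
  ring

theorem wronskian_eq_wronskian_zero (hD : ∀ n, (D n).IsSymm) (hV : ∀ n, (V n).IsSymm)
    (hu : IsJacobiSolution D V z u) (hv : IsJacobiSolution D V z v) (n : ℕ) :
    wronskian D u v n = wronskian D u v 0 := by
  induction n with
  | zero => rfl
  | succ n ih => rw [wronskian_succ hD hV hu hv, ih]

theorem IsJacobiSolution.eq_zero [DecidableEq ι] (hD : ∀ n, IsUnit (D n).det)
    (hu : IsJacobiSolution D V z u) (h₀ : u 0 = 0) (h₁ : u 1 = 0) : u = 0 := by
  have hpair : ∀ n, u n = 0 ∧ u (n + 1) = 0 := by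
    intro n
    induction n with
    | zero => exact ⟨h₀, h₁⟩
    | succ n ih =>
      refine ⟨ih.2, mulVec_injective_of_isUnit ((isUnit_iff_isUnit_det _).2 (hD (n + 1))) ?_⟩
      simpa [ih.1, ih.2] using hu.mulVec_succ n
  exact funext fun n => (hpair n).1

def initialValues : (ℕ → ι → R) →ₗ[R] (ι → R) × (ι → R) :=
  (LinearMap.proj 0).prod (LinearMap.proj 1)

theorem disjoint_jacobiSolutions_ker_initialValues [DecidableEq ι]
    (hD : ∀ n, IsUnit (D n).det) :
    Disjoint (jacobiSolutions D V z) (LinearMap.ker initialValues) := by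
  rw [disjoint_iff_inf_le]
  rintro u ⟨hu, hu₀₁ : initialValues u = 0⟩
  exact hu.eq_zero hD (congrArg Prod.fst hu₀₁) (congrArg Prod.snd hu₀₁)

end CommRing

section Field

variable {K ι : Type*} [Field K] [Fintype ι] [DecidableEq ι]

def wronskianForm (M : Matrix ι ι K) : LinearMap.BilinForm K ((ι → K) × (ι → K)) :=
  let B := (toBilin' M).compl₁₂ (LinearMap.snd K _ _) (LinearMap.fst K _ _)
  B - B.flip

theorem wronskianForm_apply (M : Matrix ι ι K) (x y : (ι → K) × (ι → K)) :
    wronskianForm M x y = x.2 ⬝ᵥ (M *ᵥ y.1) - y.2 ⬝ᵥ (M *ᵥ x.1) := by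
  simp [wronskianForm, toBilin'_apply']

theorem wronskianForm_initialValues (D : ℕ → Matrix ι ι K) (u v : ℕ → ι → K) :
    wronskianForm (D 0) (initialValues u) (initialValues v) = wronskian D u v 0 := by
  simp [wronskianForm_apply, initialValues, wronskian]

theorem wronskianForm_isAlt (M : Matrix ι ι K) : (wronskianForm M).IsAlt := fun x => by
  simp [wronskianForm_apply]

theorem wronskianForm_nondegenerate {M : Matrix ι ι K} (hM : IsUnit M.det) :
    (wronskianForm M).Nondegenerate := by
  refine ((wronskianForm_isAlt M).isRefl.nondegenerate_iff_separatingLeft).2 fun x hx => ?_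
  have hM' : M.Nondegenerate := nondegenerate_of_det_ne_zero hM.ne_zero
  refine Prod.ext (hM'.eq_zero_of_ortho' fun w => ?_) (hM'.eq_zero_of_ortho fun w => ?_)
  · simpa [wronskianForm_apply] using hx (0, w)
  · simpa [wronskianForm_apply] using hx (w, 0)

end Field

end Matrix

namespace LinearMap.BilinForm

variable {K V : Type*} [Field K] [AddCommGroup V] [Module K V] [FiniteDimensional K V]

theorem two_mul_finrank_le_of_le_orthogonal {B : LinearMap.BilinForm K V} (hB : B.Nondegenerate)
    {W : Submodule K V} (hW : W ≤ B.orthogonal W) :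
    2 * Module.finrank K W ≤ Module.finrank K V := by
  have := Submodule.finrank_mono hW
  have := finrank_orthogonal hB W
  have := W.finrank_le
  omega

end LinearMap.BilinForm

section SquareSummable

variable (𝕜 ι : Type*) [NormedField 𝕜] [Fintype ι]

def squareSummable : Submodule 𝕜 (ℕ → ι → 𝕜) where
  carrier := {u | Summable fun n => ∑ i, ‖u n i‖ ^ 2}
  add_mem' {u v} hu hv := by
    refine .of_nonneg_of_le (fun n => by positivity) (fun n => ?_) ((hu.add hv).mul_left 2)
    rw [← Finset.sum_add_distrib, Finset.mul_sum]
    refine Finset.sum_le_sum fun i _ => ?_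
    calc ‖u n i + v n i‖ ^ 2 ≤ (‖u n i‖ + ‖v n i‖) ^ 2 := by gcongr; exact norm_add_le _ _
      _ ≤ 2 * (‖u n i‖ ^ 2 + ‖v n i‖ ^ 2) := add_sq_le
  zero_mem' := by simp [summable_zero]
  smul_mem' c u hu := by
    simpa [norm_smul, mul_pow, ← Finset.mul_sum] using hu.mul_left (‖c‖ ^ 2)

end SquareSummable

theorem Finset.sum_mul_sum_le_card_div_two_mul {ι : Type*} (s : Finset ι) (f g : ι → ℝ) :
    (∑ i ∈ s, f i) * (∑ i ∈ s, g i) ≤ s.card / 2 * (∑ i ∈ s, f i ^ 2 + ∑ i ∈ s, g i ^ 2) := by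
  have hf := sq_sum_le_card_mul_sum_sq (s := s) (f := f)
  have hg := sq_sum_le_card_mul_sum_sq (s := s) (f := g)
  nlinarith [sq_nonneg (∑ i ∈ s, f i - ∑ i ∈ s, g i)]

theorem nonpos_of_le_mul_of_tendsto_sum_inv {a t : ℕ → ℝ} {c : ℝ} (ht₀ : ∀ n, 0 ≤ t n)
    (ht : Summable t) (hc : ∀ n, c ≤ a n * t n)
    (ha : Tendsto (fun N => ∑ k ∈ Finset.range N, (a k)⁻¹) atTop atTop) : c ≤ 0 := by
  by_contra! hc₀
  have ha₀ : ∀ n, 0 < a n := fun n => by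
    by_contra! h
    linarith [hc n, mul_nonpos_of_nonpos_of_nonneg h (ht₀ n)]
  have hbound : ∀ N, c * ∑ k ∈ Finset.range N, (a k)⁻¹ ≤ ∑' n, t n := fun N =>
    calc c * ∑ k ∈ Finset.range N, (a k)⁻¹ = ∑ k ∈ Finset.range N, c / a k := by
          simp only [Finset.mul_sum, div_eq_mul_inv]
      _ ≤ ∑ k ∈ Finset.range N, t k := Finset.sum_le_sum fun k _ => by
          rw [div_le_iff₀ (ha₀ k)]; linarith [hc k]
      _ ≤ ∑' n, t n := ht.sum_le_tsum _ fun k _ => ht₀ k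
  obtain ⟨N, hN⟩ := ((ha.const_mul_atTop hc₀).eventually_gt_atTop (∑' n, t n)).exists
  exact (hbound N).not_gt hN

theorem abs_apply_le_opNorm {l : ℕ} (A : Matrix (Fin l) (Fin l) ℝ) (i j : Fin l) :
    |A i j| ≤ opNorm A := by
  let T := Matrix.toEuclideanCLM (𝕜 := ℝ) (n := Fin l) A
  calc |A i j| = ‖T (EuclideanSpace.single j 1) i‖ := by simp [T, mulVec_single]
    _ ≤ ‖T (EuclideanSpace.single j 1)‖ := PiLp.norm_apply_le _ _
    _ ≤ ‖T‖ * ‖EuclideanSpace.single j (1 : ℝ)‖ := T.le_opNorm _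
    _ = opNorm A := by simp [T, opNorm]

theorem isUnit_det_cmat {l : ℕ} {A : Matrix (Fin l) (Fin l) ℝ} (hA : IsUnit A.det) :
    IsUnit (cmat A).det := by
  have h := hA.map Complex.ofRealHom
  rwa [RingHom.map_det] at h

theorem norm_dotProduct_cmat_mulVec_le {l : ℕ} (A : Matrix (Fin l) (Fin l) ℝ)
    (x y : Fin l → ℂ) :
    ‖x ⬝ᵥ (cmat A *ᵥ y)‖ ≤ opNorm A * (l / 2 * (∑ i, ‖x i‖ ^ 2 + ∑ i, ‖y i‖ ^ 2)) :=
  calc ‖x ⬝ᵥ (cmat A *ᵥ y)‖ = ‖∑ i, ∑ j, x i * ((A i j : ℂ) * y j)‖ := by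
        simp [dotProduct, mulVec, cmat, Finset.mul_sum]
    _ ≤ ∑ i, ∑ j, opNorm A * (‖x i‖ * ‖y j‖) := by
        refine (norm_sum_le _ _).trans (Finset.sum_le_sum fun i _ => ?_)
        refine (norm_sum_le _ _).trans (Finset.sum_le_sum fun j _ => ?_)
        rw [norm_mul, norm_mul, Complex.norm_real, Real.norm_eq_abs]
        nlinarith [abs_apply_le_opNorm A i j, norm_nonneg (x i), norm_nonneg (y j),
          mul_nonneg (norm_nonneg (x i)) (norm_nonneg (y j))]
    _ = opNorm A * ((∑ i, ‖x i‖) * ∑ j, ‖y j‖) := by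
        rw [Finset.sum_mul_sum, Finset.mul_sum]
        simp only [Finset.mul_sum]
    _ ≤ opNorm A * (l / 2 * (∑ i, ‖x i‖ ^ 2 + ∑ i, ‖y i‖ ^ 2)) := by
        refine mul_le_mul_of_nonneg_left ?_ (norm_nonneg _)
        simpa using Finset.sum_mul_sum_le_card_div_two_mul Finset.univ (‖x ·‖) (‖y ·‖)

theorem wronskian_eq_zero_of_mem_squareSummable {l : ℕ} {D V : ℕ → Matrix (Fin l) (Fin l) ℝ}
    {z : ℂ} {u v : ℕ → Fin l → ℂ} (hD : ∀ n, (D n).IsSymm) (hV : ∀ n, (V n).IsSymm)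
    (hdiv : Tendsto (fun N : ℕ => ∑ k ∈ Finset.range N, (opNorm (D k))⁻¹) atTop atTop)
    (hu : IsJacobiSolution (fun n => cmat (D n)) (fun n => cmat (V n)) z u)
    (hv : IsJacobiSolution (fun n => cmat (D n)) (fun n => cmat (V n)) z v)
    (hu₂ : u ∈ squareSummable ℂ (Fin l)) (hv₂ : v ∈ squareSummable ℂ (Fin l)) :
    wronskian (fun n => cmat (D n)) u v 0 = 0 := by
  let q (w : ℕ → Fin l → ℂ) (n : ℕ) : ℝ := ∑ i, ‖w n i‖ ^ 2
  let t (n : ℕ) : ℝ := l / 2 * (q u (n + 1) + q v n) + l / 2 * (q v (n + 1) + q u n)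
  have hsummable : Summable t :=
    (((summable_nat_add_iff 1).2 hu₂).add hv₂).mul_left _ |>.add <|
      (((summable_nat_add_iff 1).2 hv₂).add hu₂).mul_left _
  refine norm_le_zero_iff.1 <| nonpos_of_le_mul_of_tendsto_sum_inv (t := t)
    (fun n => by positivity) hsummable (fun n => ?_) hdiv
  have hsymm (n : ℕ) : (cmat (D n)).IsSymm := (hD n).map _
  have hsymmV (n : ℕ) : (cmat (V n)).IsSymm := (hV n).map _
  rw [← wronskian_eq_wronskian_zero hsymm hsymmV hu hv n, mul_add]
  exact (norm_sub_le _ _).trans <| add_le_add (norm_dotProduct_cmat_mulVec_le _ _ _)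
    (norm_dotProduct_cmat_mulVec_le _ _ _)

theorem l2_solutions_rank_le_general (l : ℕ)
    (D V : ℕ → Matrix (Fin l) (Fin l) ℝ)
    (hDsymm : ∀ n, (D n).IsSymm) (hVsymm : ∀ n, (V n).IsSymm)
    (hDinv : ∀ n, IsUnit (D n).det)
    (hdiv : Tendsto (fun N : ℕ => ∑ k ∈ Finset.range N, (opNorm (D k))⁻¹) atTop atTop)
    (z : ℂ) :
    ∃ S : Submodule ℂ (ℕ → Fin l → ℂ),
      (S : Set (ℕ → Fin l → ℂ)) =
        {u : ℕ → Fin l → ℂ |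
          (∀ n : ℕ, 1 ≤ n → cmat (D (n - 1)) *ᵥ u (n - 1) + cmat (D n) *ᵥ u (n + 1)
            + cmat (V n) *ᵥ u n = z • u n)
          ∧ Summable (fun n : ℕ => ∑ i, ‖u n i‖ ^ 2)} ∧
      Module.rank ℂ S ≤ (l : Cardinal) := by
  let S := jacobiSolutions (fun n => cmat (D n)) (fun n => cmat (V n)) z ⊓
    squareSummable ℂ (Fin l)
  refine ⟨S, rfl, ?_⟩
  let Φ := initialValues.domRestrict S
  have hΦ : Function.Injective Φ := LinearMap.injective_domRestrict_iff.2 <|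
    (disjoint_jacobiSolutions_ker_initialValues fun n => isUnit_det_cmat (hDinv n)).mono_left
      inf_le_left
  have hiso :
      LinearMap.range Φ ≤ (wronskianForm (cmat (D 0))).orthogonal (LinearMap.range Φ) := by
    rintro _ ⟨u, rfl⟩
    refine LinearMap.BilinForm.mem_orthogonal_iff.2 ?_
    rintro _ ⟨v, rfl⟩
    exact (wronskianForm_initialValues (fun n => cmat (D n)) v u).trans <|
      wronskian_eq_zero_of_mem_squareSummable hDsymm hVsymm hdiv v.2.1 u.2.1 v.2.2 u.2.2
  have hdim := LinearMap.BilinForm.two_mul_finrank_le_of_le_orthogonal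
    (wronskianForm_nondegenerate (isUnit_det_cmat (hDinv 0))) hiso
  rw [← rank_range_of_injective Φ hΦ, ← Module.finrank_eq_rank, Nat.cast_le]
  simp only [Module.finrank_prod, Module.finrank_fin_fun] at hdim
  omega

/-- If `Σ_{k=0}^∞ 1/‖D_k‖ = ∞`, then for every `z ∈ ℂ` the square-summable solutions of the
eigenvalue equation form a complex subspace of dimension at most `l`. -/
theorem l2_solutions_rank_le (l : ℕ) (hl : 1 ≤ l)
    (D V : ℕ → Matrix (Fin l) (Fin l) ℝ)
    (hDsymm : ∀ n, (D n).IsSymm) (hVsymm : ∀ n, (V n).IsSymm)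
    (hDinv : ∀ n, IsUnit (D n).det)
    (hdiv : Tendsto (fun N : ℕ => ∑ k ∈ Finset.range N, (opNorm (D k))⁻¹) atTop atTop)
    (z : ℂ) :
    ∃ S : Submodule ℂ (ℕ → Fin l → ℂ),
      (S : Set (ℕ → Fin l → ℂ)) =
        {u : ℕ → Fin l → ℂ |
          (∀ n : ℕ, 1 ≤ n → cmat (D (n - 1)) *ᵥ u (n - 1) + cmat (D n) *ᵥ u (n + 1)
            + cmat (V n) *ᵥ u n = z • u n)
          ∧ Summable (fun n : ℕ => ∑ i, ‖u n i‖ ^ 2)} ∧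
      Module.rank ℂ S ≤ (l : Cardinal) :=
  l2_solutions_rank_le_general l D V hDsymm hVsymm hDinv hdiv z
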